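/- arXiv:1803.10412 — 3 statements merged into one kernel-verified Lean document; each statement's English description precedes it below -/
import Mathlib

section
/- Universal property of the associative completion: let G be an inversional local groupoid and let H be a (global) groupoid over the same base M. For every morphism of local groupoids F : G → H (a map commuting with source, target, unit, and with multiplication wherever it is defined in G), there exists a unique groupoid morphism F̃ : AC(G) → H such that F̃ composed with the completion map G → AC(G) (sending g to the class of the one-letter word (g)) equals F. -/
/-- An (algebraic) local groupoid over a base `M`: a set of arrows `G` with source,
target, unit, a partially defined multiplication (with domain `D`) satisfying the
unit laws and 3-associativity wherever defined. -/
structure LocalGroupoid (G : Type*) (M : Type*) where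
  s : G → M
  t : G → M
  unit : M → G
  s_unit : ∀ x, s (unit x) = x
  t_unit : ∀ x, t (unit x) = x
  /-- the domain of the multiplication -/
  D : G → G → Prop
  D_st : ∀ {g h}, D g h → s g = t h
  mul : G → G → G
  D_unit_right : ∀ g, D g (unit (s g))
  D_unit_left : ∀ g, D (unit (t g)) g
  s_mul : ∀ {g h}, D g h → s (mul g h) = s h
  t_mul : ∀ {g h}, D g h → t (mul g h) = t g
  mul_unit_right : ∀ g, mul g (unit (s g)) = g
  unit_mul : ∀ g, mul (unit (t g)) g = g
  assoc3 : ∀ {g h k}, D g h → D (mul g h) k → D h k → D g (mul h k) →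
    mul (mul g h) k = mul g (mul h k)

namespace LocalGroupoid

variable {G : Type*} {M : Type*} (L : LocalGroupoid G M)

/-- A well-formed word: a nonempty list `(w₁, …, wₙ)` of arrows with
`s wᵢ = t wᵢ₊₁`. -/
def WFWord (w : List G) : Prop := w ≠ [] ∧ w.Chain' (fun a b => L.s a = L.t b)

/-- An elementary contraction of words: replace an adjacent pair whose product is
defined by the product. -/
inductive Contr : List G → List G → Prop
  | mk (p q : List G) {g h : G} (hD : L.D g h) :
      Contr (p ++ g :: h :: q) (p ++ L.mul g h :: q)

/-- The equivalence relation on words generated by contractions and expansions. -/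
def WordEquiv : List G → List G → Prop := Relation.EqvGen L.Contr

/-- `ContractsTo w v`: `v` is obtained from `w` by a finite sequence of contractions
(equivalently, `w` is obtained from `v` by expansions, i.e. `v ≤ w`). -/
def ContractsTo : List G → List G → Prop := Relation.ReflTransGen L.Contr

/-- The type of well-formed words. -/
def Word := {w : List G // L.WFWord w}

instance wordSetoid : Setoid L.Word :=
  ⟨fun a b => L.WordEquiv a.1 b.1, by
    constructor
    · exact fun a => Relation.EqvGen.refl _
    · exact fun h => Relation.EqvGen.symm _ _ h
    · exact fun h1 h2 => Relation.EqvGen.trans _ _ _ h1 h2⟩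

/-- The associative completion of a local groupoid: well-formed words modulo
contractions and expansions. -/
def AC := Quotient L.wordSetoid

/-- The one-letter word `(g)`. -/
def singletonWord (g : G) : L.Word := ⟨[g], by simp [WFWord, List.Chain']⟩

/-- The completion map `G → AC(G)`. -/
def completion (g : G) : L.AC := Quotient.mk _ (L.singletonWord g)

/-- Target of a well-formed word: the target of its first letter. -/
def wordTgt (w : L.Word) : M := L.t (w.1.head w.2.1)

/-- Source of a well-formed word: the source of its last letter. -/
def wordSrc (w : L.Word) : M := L.s (w.1.getLast w.2.1)

/-- `b` is a two-sided inverse of `a`. -/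
def InvPair (a b : G) : Prop :=
  L.D a b ∧ L.D b a ∧ L.mul a b = L.unit (L.t a) ∧ L.mul b a = L.unit (L.s a)

/-- An arrow is invertible if it has a two-sided inverse. -/
def Invertible (a : G) : Prop := ∃ b, L.InvPair a b

/-- `LProd as seed r`: `r = a₁ (a₂ (⋯ (aₖ seed)))` where `as = [a₁, …, aₖ]`, all
products being defined. -/
inductive LProd : List G → G → G → Prop
  | nil (g : G) : LProd [] g g
  | cons {as : List G} {g p : G} (a : G) : LProd as g p → L.D a p → LProd (a :: as) g (L.mul a p)

/-- `RProd seed bs r`: `r = ((⋯((seed b₁) b₂)⋯) bₖ)` where `bs = [b₁, …, bₖ]`, all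
products being defined. -/
inductive RProd : G → List G → G → Prop
  | nil (g : G) : RProd g [] g
  | cons {bs : List G} {g r : G} (b : G) (hD : L.D g b) : RProd (L.mul g b) bs r → RProd g (b :: bs) r

/-- The inverse-decomposition property: every composable pair `(g,h)` decomposes
through invertible elements, either on the left:
`g = aₗ(⋯(a₂ a₁))` and `h = a₁⁻¹(⋯(aₗ⁻¹ (gh)))`, or on the right:
`h = ((b₁ b₂)⋯)bₘ` and `g = (((gh) bₘ⁻¹)⋯) b₁⁻¹`. -/
def InvDecomp : Prop :=
  ∀ g h, L.D g h →
    (∃ a : List (G × G), (∀ p ∈ a, L.InvPair p.1 p.2) ∧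
        L.LProd (a.map Prod.fst).reverse (L.unit (L.s g)) g ∧
        L.LProd (a.map Prod.snd) (L.mul g h) h) ∨
    (∃ b : List (G × G), (∀ p ∈ b, L.InvPair p.1 p.2) ∧
        L.RProd (L.unit (L.t h)) (b.map Prod.fst) h ∧
        L.RProd (L.mul g h) (b.map Prod.snd).reverse g)

/-- An associator at `x`: an arrow `g` with `s g = t g = x` such that some
well-formed word can be contracted both to `(g)` and to `(u x)`. -/
def IsAssociator (x : M) (g : G) : Prop :=
  L.s g = x ∧ L.t g = x ∧
    ∃ w, L.WFWord w ∧ L.ContractsTo w [g] ∧ L.ContractsTo w [L.unit x]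

/-- An arrow is inversional if it is a well-defined product of invertible elements. -/
def Inversional (g : G) : Prop :=
  ∃ w : List G, L.WFWord w ∧ (∀ a ∈ w, L.Invertible a) ∧ L.ContractsTo w [g]

/-- `EvalsTo w g`: some full bracketing of the word `w` can be evaluated (all
intermediate products being defined), with result `g`. -/
inductive EvalsTo : List G → G → Prop
  | single (g : G) : EvalsTo [g] g
  | mul {w1 w2 : List G} {g h : G} : EvalsTo w1 g → EvalsTo w2 h → L.D g h →
      EvalsTo (w1 ++ w2) (L.mul g h)

/-- Global associativity: all defined bracketings of a composable tuple agree. -/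
def GloballyAssociative : Prop := ∀ w g h, L.EvalsTo w g → L.EvalsTo w h → g = h

end LocalGroupoid

/-- A morphism of local groupoids. -/
structure IsMorphism {G₁ M₁ G₂ M₂ : Type*} (L₁ : LocalGroupoid G₁ M₁)
    (L₂ : LocalGroupoid G₂ M₂) (F : G₁ → G₂) (f : M₁ → M₂) : Prop where
  map_s : ∀ g, L₂.s (F g) = f (L₁.s g)
  map_t : ∀ g, L₂.t (F g) = f (L₁.t g)
  map_unit : ∀ x, F (L₁.unit x) = L₂.unit (f x)
  map_D : ∀ {g h}, L₁.D g h → L₂.D (F g) (F h)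
  map_mul : ∀ {g h}, L₁.D g h → F (L₁.mul g h) = L₂.mul (F g) (F h)

/-- A local groupoid is global (an honest groupoid) if multiplication is defined for
all matching pairs and every arrow is invertible. -/
structure IsGlobal {G M : Type*} (L : LocalGroupoid G M) : Prop where
  total : ∀ {g h}, L.s g = L.t h → L.D g h
  inv : ∀ g, L.Invertible g

/-! The lift sends the class of a word `(g₁, …, gₙ)` to the product `F g₁ ⋯ F gₙ` in `H`. This
is well defined because `H` is associative and `F` turns a contraction `(g, h) ↦ m(g, h)` into
an equality of products; it is unique because every word is a concatenation of one-letter words. -/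

namespace LocalGroupoid

variable {G M : Type*} {L : LocalGroupoid G M}

theorem Contr.wfWord_iff {w v : List G} (hc : L.Contr w v) : L.WFWord w ↔ L.WFWord v := by
  obtain ⟨p, q, hD⟩ := hc
  change _ ∧ List.IsChain _ _ ↔ _ ∧ List.IsChain _ _
  simp [List.isChain_append, List.isChain_cons, L.s_mul hD, L.t_mul hD, L.D_st hD]

theorem WordEquiv.wfWord_iff {w v : List G} (he : L.WordEquiv w v) :
    L.WFWord w ↔ L.WFWord v := by
  induction he with
  | rel _ _ hc => exact hc.wfWord_iff
  | refl => exact Iff.rfl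
  | symm _ _ _ ih => exact ih.symm
  | trans _ _ _ _ _ ih₁ ih₂ => exact ih₁.trans ih₂

section Map

variable {G₂ M₂ : Type*} {L₂ : LocalGroupoid G₂ M₂} {F : G → G₂} {f : M → M₂}

theorem WFWord.map (hF : IsMorphism L L₂ F f) {w : List G} (hw : L.WFWord w) :
    L₂.WFWord (w.map F) := by
  refine ⟨by simpa using hw.1, (List.isChain_map F).2 (hw.2.imp fun a b hab => ?_)⟩
  rw [hF.map_s, hF.map_t, hab]

theorem Contr.map (hF : IsMorphism L L₂ F f) {w v : List G} (hc : L.Contr w v) :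
    L₂.Contr (w.map F) (v.map F) := by
  obtain ⟨p, q, hD⟩ := hc
  simpa [hF.map_mul hD] using Contr.mk (p.map F) (q.map F) (hF.map_D hD)

theorem WordEquiv.map (hF : IsMorphism L L₂ F f) {w v : List G} (he : L.WordEquiv w v) :
    L₂.WordEquiv (w.map F) (v.map F) := by
  induction he with
  | rel _ _ hc => exact .rel _ _ (hc.map hF)
  | refl => exact .refl _
  | symm _ _ _ ih => exact .symm _ _ ih
  | trans _ _ _ _ _ ih₁ ih₂ => exact .trans _ _ _ ih₁ ih₂

def Word.map (hF : IsMorphism L L₂ F f) (w : L.Word) : L₂.Word := ⟨w.1.map F, w.2.map hF⟩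

theorem Word.map_append (hF : IsMorphism L L₂ F f) (w v : L.Word) (h : L.WFWord (w.1 ++ v.1)) :
    Word.map hF ⟨w.1 ++ v.1, h⟩ =
      ⟨(w.map hF).1 ++ (v.map hF).1, List.map_append (f := F) ▸ h.map hF⟩ :=
  Subtype.ext (List.map_append ..)

theorem wordSrc_map (hF : IsMorphism L L₂ F f) (w : L.Word) :
    L₂.wordSrc (w.map hF) = f (L.wordSrc w) := by
  simp [wordSrc, Word.map, List.getLast_map, hF.map_s]

theorem wordTgt_map (hF : IsMorphism L L₂ F f) (w : L.Word) :
    L₂.wordTgt (w.map hF) = f (L.wordTgt w) := by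
  simp [wordTgt, Word.map, List.head_map, hF.map_t]

def AC.map (hF : IsMorphism L L₂ F f) : L.AC → L₂.AC :=
  Quotient.map (Word.map hF) fun _ _ => WordEquiv.map hF

end Map

def Word.prod (w : L.Word) : G := w.1.tail.foldl L.mul (w.1.head w.2.1)

end LocalGroupoid

namespace IsGlobal

variable {G M : Type*} {L : LocalGroupoid G M}

local notation "Composable" => fun a b => L.s a = L.t b

theorem mul_assoc (hL : IsGlobal L) {a b c : G} (hab : L.s a = L.t b) (hbc : L.s b = L.t c) :
    L.mul (L.mul a b) c = L.mul a (L.mul b c) :=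
  L.assoc3 (hL.total hab) (hL.total (by rw [L.s_mul (hL.total hab), hbc])) (hL.total hbc)
    (hL.total (by rw [L.t_mul (hL.total hbc), hab]))

theorem isChain_mul_cons (hL : IsGlobal L) {a b : G} {l : List G}
    (h : List.IsChain Composable (a :: b :: l)) : List.IsChain Composable (L.mul a b :: l) := by
  rw [List.isChain_cons_cons] at h
  cases l with
  | nil => exact .singleton _
  | cons c l =>
    rw [List.isChain_cons_cons] at h ⊢
    exact ⟨by rw [L.s_mul (hL.total h.1), h.2.1], h.2.2⟩

theorem t_foldl_mul (hL : IsGlobal L) {a : G} {l : List G}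
    (h : List.IsChain Composable (a :: l)) : L.t (l.foldl L.mul a) = L.t a := by
  induction l generalizing a with
  | nil => rfl
  | cons b l ih =>
    rw [List.foldl_cons, ih (hL.isChain_mul_cons h),
      L.t_mul (hL.total (List.isChain_cons_cons.1 h).1)]

theorem s_foldl_mul (hL : IsGlobal L) {a : G} {l : List G}
    (h : List.IsChain Composable (a :: l)) :
    L.s (l.foldl L.mul a) = L.s ((a :: l).getLast (List.cons_ne_nil a l)) := by
  induction l generalizing a with
  | nil => rfl
  | cons b l ih =>
    rw [List.foldl_cons, ih (hL.isChain_mul_cons h)]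
    cases l with
    | nil => exact L.s_mul (hL.total (List.isChain_cons_cons.1 h).1)
    | cons c l => rfl

theorem mul_foldl_mul (hL : IsGlobal L) {x a : G} {l : List G} (hx : L.s x = L.t a)
    (h : List.IsChain Composable (a :: l)) :
    L.mul x (l.foldl L.mul a) = l.foldl L.mul (L.mul x a) := by
  induction l generalizing a with
  | nil => rfl
  | cons b l ih =>
    have hab := (List.isChain_cons_cons.1 h).1
    rw [List.foldl_cons, List.foldl_cons,
      ih (by rw [L.t_mul (hL.total hab), hx]) (hL.isChain_mul_cons h), hL.mul_assoc hx hab]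

theorem foldl_mul_append (hL : IsGlobal L) {a b : G} {l m : List G}
    (h : List.IsChain Composable (a :: (l ++ b :: m))) :
    (l ++ b :: m).foldl L.mul a = L.mul (l.foldl L.mul a) (m.foldl L.mul b) := by
  induction l generalizing a with
  | nil =>
    exact (hL.mul_foldl_mul (List.isChain_cons_cons.1 h).1 (List.isChain_cons_cons.1 h).2).symm
  | cons c l ih => exact ih (hL.isChain_mul_cons h)

open LocalGroupoid

theorem s_wordProd (hL : IsGlobal L) (w : L.Word) : L.s w.prod = L.wordSrc w := by
  obtain ⟨_ | ⟨a, l⟩, hw⟩ := w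
  · exact (hw.1 rfl).elim
  · exact hL.s_foldl_mul hw.2

theorem t_wordProd (hL : IsGlobal L) (w : L.Word) : L.t w.prod = L.wordTgt w := by
  obtain ⟨_ | ⟨a, l⟩, hw⟩ := w
  · exact (hw.1 rfl).elim
  · exact hL.t_foldl_mul hw.2

theorem wordProd_append (hL : IsGlobal L) (w v : L.Word) (h : L.WFWord (w.1 ++ v.1)) :
    Word.prod (⟨w.1 ++ v.1, h⟩ : L.Word) = L.mul w.prod v.prod := by
  obtain ⟨_ | ⟨a, l⟩, hw⟩ := w
  · exact (hw.1 rfl).elim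
  obtain ⟨_ | ⟨b, m⟩, hv⟩ := v
  · exact (hv.1 rfl).elim
  exact hL.foldl_mul_append h.2

theorem wordProd_eq_of_contr (hL : IsGlobal L) {w v : List G} (hc : L.Contr w v)
    (hw : L.WFWord w) (hv : L.WFWord v) : Word.prod (⟨w, hw⟩ : L.Word) = Word.prod ⟨v, hv⟩ := by
  -- both sides unfold to a product ending in `q.foldl L.mul (L.mul g h)`
  obtain ⟨_ | ⟨a, p⟩, q, hD⟩ := hc
  · rfl
  · exact (hL.foldl_mul_append hw.2).trans (hL.foldl_mul_append hv.2).symm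

theorem wordProd_eq_of_wordEquiv (hL : IsGlobal L) {w v : List G} (he : L.WordEquiv w v)
    (hw : L.WFWord w) (hv : L.WFWord v) : Word.prod (⟨w, hw⟩ : L.Word) = Word.prod ⟨v, hv⟩ := by
  induction he with
  | rel _ _ hc => exact hL.wordProd_eq_of_contr hc _ _
  | refl => rfl
  | symm _ _ _ ih => exact (ih hv hw).symm
  | trans _ _ _ h₁ _ ih₁ ih₂ =>
    have hmid := (WordEquiv.wfWord_iff h₁).1 hw
    exact (ih₁ hw hmid).trans (ih₂ hmid hv)

end IsGlobal

namespace LocalGroupoid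

variable {G M : Type*} {L : LocalGroupoid G M}

def AC.prod (hL : IsGlobal L) : L.AC → G :=
  Quotient.lift Word.prod fun w v he => hL.wordProd_eq_of_wordEquiv he w.2 v.2

theorem AC.funext_of_completion {X : Type*} (mulX : X → X → X) {Φ Ψ : L.AC → X}
    (hΦ : ∀ (w v : L.Word) (h : L.WFWord (w.1 ++ v.1)),
      Φ (Quotient.mk _ ⟨w.1 ++ v.1, h⟩) = mulX (Φ (Quotient.mk _ w)) (Φ (Quotient.mk _ v)))
    (hΨ : ∀ (w v : L.Word) (h : L.WFWord (w.1 ++ v.1)),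
      Ψ (Quotient.mk _ ⟨w.1 ++ v.1, h⟩) = mulX (Ψ (Quotient.mk _ w)) (Ψ (Quotient.mk _ v)))
    (hc : ∀ g, Φ (L.completion g) = Ψ (L.completion g)) : Φ = Ψ := by
  refine funext (Quotient.ind fun w => ?_)
  obtain ⟨l, hl⟩ := w
  induction l with
  | nil => exact (hl.1 rfl).elim
  | cons g l ih =>
    cases l with
    | nil => exact hc g
    | cons b l =>
      have hbl : L.WFWord (b :: l) := ⟨List.cons_ne_nil b l, hl.2.tail⟩
      exact (hΦ (L.singletonWord g) ⟨b :: l, hbl⟩ hl).trans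
        ((congrArg₂ mulX (hc g) (ih hbl)).trans (hΨ (L.singletonWord g) ⟨b :: l, hbl⟩ hl).symm)

end LocalGroupoid

theorem AC_universal_property_general {G H : Type*} {M : Type*}
    (L : LocalGroupoid G M) (LH : LocalGroupoid H M) (hH : IsGlobal LH)
    (F : G → H) (hF : IsMorphism L LH F id) :
    ∃! Ft : L.AC → H,
      (∀ x : M, Ft (Quotient.mk _ (L.singletonWord (L.unit x))) = LH.unit x) ∧
      (∀ w : L.Word, LH.s (Ft (Quotient.mk _ w)) = L.wordSrc w) ∧
      (∀ w : L.Word, LH.t (Ft (Quotient.mk _ w)) = L.wordTgt w) ∧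
      (∀ (w v : L.Word) (h : L.WFWord (w.1 ++ v.1)),
        Ft (Quotient.mk _ (⟨w.1 ++ v.1, h⟩ : L.Word)) =
          LH.mul (Ft (Quotient.mk _ w)) (Ft (Quotient.mk _ v))) ∧
      (∀ g : G, Ft (L.completion g) = F g) := by
  let Ft := LocalGroupoid.AC.prod hH ∘ LocalGroupoid.AC.map hF
  have hmul : ∀ (w v : L.Word) (h : L.WFWord (w.1 ++ v.1)),
      Ft (Quotient.mk _ ⟨w.1 ++ v.1, h⟩) = LH.mul (Ft (Quotient.mk _ w)) (Ft (Quotient.mk _ v)) :=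
    fun w v h => (congrArg LocalGroupoid.Word.prod (LocalGroupoid.Word.map_append hF w v h)).trans
      (hH.wordProd_append _ _ _)
  refine ⟨Ft, ⟨hF.map_unit, fun w => ?_, fun w => ?_, hmul, fun _ => rfl⟩, ?_⟩
  · exact (hH.s_wordProd (w.map hF)).trans (LocalGroupoid.wordSrc_map hF w)
  · exact (hH.t_wordProd (w.map hF)).trans (LocalGroupoid.wordTgt_map hF w)
  · rintro Φ ⟨-, -, -, hΦ, hΦF⟩
    exact LocalGroupoid.AC.funext_of_completion LH.mul hΦ hmul hΦF

/-- Universal property of the associative completion: for an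
inversional local groupoid `G` over `M`, a (global) groupoid `H` over the same base,
and a morphism of local groupoids `F : G → H` (over the identity of `M`), there is a
unique groupoid morphism `F̃ : AC(G) → H` (it preserves units, source, target, and
products, the product of classes being represented by concatenation of words) such
that `F̃` composed with the completion map `G → AC(G)` equals `F`. -/
theorem AC_universal_property {G H : Type*} {M : Type*}
    (L : LocalGroupoid G M) (LH : LocalGroupoid H M) (hH : IsGlobal LH)
    (hinv : ∀ g : G, L.Inversional g)
    (F : G → H) (hF : IsMorphism L LH F id) :
    ∃! Ft : L.AC → H,
      (∀ x : M, Ft (Quotient.mk _ (L.singletonWord (L.unit x))) = LH.unit x) ∧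
      (∀ w : L.Word, LH.s (Ft (Quotient.mk _ w)) = L.wordSrc w) ∧
      (∀ w : L.Word, LH.t (Ft (Quotient.mk _ w)) = L.wordTgt w) ∧
      (∀ (w v : L.Word) (h : L.WFWord (w.1 ++ v.1)),
        Ft (Quotient.mk _ (⟨w.1 ++ v.1, h⟩ : L.Word)) =
          LH.mul (Ft (Quotient.mk _ w)) (Ft (Quotient.mk _ v))) ∧
      (∀ g : G, Ft (L.completion g) = F g) :=
  AC_universal_property_general L LH hH F hF
end

section
/- Suppose G is a local groupoid with the following inverse-decomposition property: for every pair (g,h) in the domain of multiplication there exist invertible elements a_1,...,a_l with g = a_l(⋯(a_2 a_1)) and h = a_1^{-1}(⋯(a_l^{-1}(gh))), or invertible elements b_1,...,b_m with h = ((b_1 b_2)⋯)b_m and g = (((gh)b_m^{-1})⋯)b_1^{-1}, all products being defined. Then for any two well-formed words w_1, w_2: w_1 ~ w_2 if and only if there exists a well-formed word w_3 that is a common expansion of both, i.e. w_1 ≤ w_3 and w_2 ≤ w_3 (where w ≤ w' means w' is obtained from w by a finite sequence of expansions). -/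
/-! The relation "has a common expansion" contains the contractions and is symmetric; it is
transitive because expansions are confluent: two words contracting to the same word have a common
expansion. Splitting contractions letterwise reduces this to words contracting to one letter `k`.
If `V` reaches `(k)` through a last contraction of `(g, h)`, the inverse decomposition of `(g, h)`
expands any other `U ≥ (k)` to a word `W_g ++ W_h` with `W_g ≥ (g)` and `W_h ≥ (h)`: in the left
case `W_g = (a_l, …, a_1, 1)` and `W_h = (a_1⁻¹, …, a_l⁻¹) ++ U`, and `W_g ++ W_h` contracts to `U`
because the inverses cancel around the unit. Induction on the length of `V` then joins `W_g` and
`W_h` with the two halves of `V`. -/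

namespace LocalGroupoid

variable {G M : Type*} {L : LocalGroupoid G M}

theorem Contr.context {u v : List G} (p q : List G) (h : L.Contr u v) :
    L.Contr (p ++ u ++ q) (p ++ v ++ q) := by
  obtain ⟨p', q', hD⟩ := h
  simpa using Contr.mk (L := L) (p ++ p') (q' ++ q) hD

theorem ContractsTo.context {u v : List G} (p q : List G) (h : L.ContractsTo u v) :
    L.ContractsTo (p ++ u ++ q) (p ++ v ++ q) :=
  Relation.ReflTransGen.lift (fun w ↦ p ++ w ++ q) (fun _ _ ↦ Contr.context p q) _ _ h

theorem ContractsTo.append {u v u' v' : List G} (hu : L.ContractsTo u u')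
    (hv : L.ContractsTo v v') : L.ContractsTo (u ++ v) (u' ++ v') := by
  have hu' : L.ContractsTo (u ++ v) (u' ++ v) := by simpa using hu.context [] v
  have hv' : L.ContractsTo (u' ++ v) (u' ++ v') := by simpa using hv.context u' []
  exact hu'.trans hv'

theorem ContractsTo.wordEquiv {u v : List G} (h : L.ContractsTo u v) : L.WordEquiv u v :=
  Relation.EqvGen.reflTransGen_le_eqvGen _ _ _ h

theorem Contr.length_eq {u v : List G} (h : L.Contr u v) : u.length = v.length + 1 := by
  obtain ⟨p, q, hD⟩ := h
  simp only [List.length_append, List.length_cons]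
  omega

theorem ContractsTo.length_le {u v : List G} (h : L.ContractsTo u v) : v.length ≤ u.length := by
  induction h with
  | refl => rfl
  | tail _ step ih => have := step.length_eq; omega

theorem Contr.map_t_head? {u v : List G} (h : L.Contr u v) :
    u.head?.map L.t = v.head?.map L.t := by
  obtain ⟨_ | _, q, hD⟩ := h <;> simp [L.t_mul hD]

theorem Contr.map_s_getLast? {u v : List G} (h : L.Contr u v) :
    u.getLast?.map L.s = v.getLast?.map L.s := by
  obtain ⟨p, q, hD⟩ := h
  rcases q.eq_nil_or_concat with rfl | ⟨q, a, rfl⟩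
  · simp [L.s_mul hD]
  · simp only [List.concat_eq_append, ← List.cons_append, ← List.append_assoc,
      List.getLast?_concat]

theorem ContractsTo.map_t_head? {u v : List G} (h : L.ContractsTo u v) :
    u.head?.map L.t = v.head?.map L.t := by
  induction h with
  | refl => rfl
  | tail _ step ih => exact ih.trans step.map_t_head?

theorem ContractsTo.map_s_getLast? {u v : List G} (h : L.ContractsTo u v) :
    u.getLast?.map L.s = v.getLast?.map L.s := by
  induction h with
  | refl => rfl
  | tail _ step ih => exact ih.trans step.map_s_getLast?

theorem ContractsTo.eq_nil {u : List G} (h : L.ContractsTo u []) : u = [] := by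
  simpa using h.map_t_head?

theorem ContractsTo.exists_cons {U : List G} {k : G} (h : L.ContractsTo U [k]) :
    ∃ u₀ U', U = u₀ :: U' ∧ L.t u₀ = L.t k := by
  have := h.map_t_head?
  cases U with
  | nil => simp at this
  | cons u₀ U' => exact ⟨u₀, U', rfl, by simpa using this⟩

theorem ContractsTo.exists_concat {U : List G} {k : G} (h : L.ContractsTo U [k]) :
    ∃ U' uₗ, U = U' ++ [uₗ] ∧ L.s uₗ = L.s k := by
  have := h.map_s_getLast?
  rcases U.eq_nil_or_concat with rfl | ⟨U', uₗ, rfl⟩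
  · simp at this
  · exact ⟨U', uₗ, List.concat_eq_append .., by simpa using this⟩

theorem Contr.exists_append_of_append {v w₁ w₂ : List G} (h : L.Contr v (w₁ ++ w₂)) :
    ∃ v₁ v₂, v = v₁ ++ v₂ ∧ L.ContractsTo v₁ w₁ ∧ L.ContractsTo v₂ w₂ := by
  generalize hw : w₁ ++ w₂ = w at h
  obtain @⟨p, q, x, y, hD⟩ := h
  rcases List.append_eq_append_iff.mp hw with ⟨a, rfl, rfl⟩ | ⟨_ | ⟨m, c⟩, rfl, hc⟩
  · exact ⟨w₁, a ++ x :: y :: q, by simp, .refl, .single (Contr.mk a q hD)⟩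
  · rw [List.nil_append] at hc
    subst hc
    exact ⟨p ++ [], x :: y :: q, by simp, .refl,
      .single (by simpa using Contr.mk (L := L) [] q hD)⟩
  · obtain ⟨rfl, rfl⟩ := List.cons_eq_cons.mp hc
    exact ⟨p ++ x :: y :: c, w₂, by simp, .single (Contr.mk p c hD), .refl⟩

theorem ContractsTo.exists_append_of_append {v w₁ w₂ : List G}
    (h : L.ContractsTo v (w₁ ++ w₂)) :
    ∃ v₁ v₂, v = v₁ ++ v₂ ∧ L.ContractsTo v₁ w₁ ∧ L.ContractsTo v₂ w₂ := by
  induction h using Relation.ReflTransGen.head_induction_on with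
  | refl => exact ⟨w₁, w₂, rfl, .refl, .refl⟩
  | head step _ ih =>
    obtain ⟨v₁', v₂', rfl, h₁, h₂⟩ := ih
    obtain ⟨v₁, v₂, rfl, g₁, g₂⟩ := step.exists_append_of_append
    exact ⟨v₁, v₂, rfl, g₁.trans h₁, g₂.trans h₂⟩

theorem Contr.exists_pair_of_singleton {v : List G} {k : G} (h : L.Contr v [k]) :
    ∃ x y, L.D x y ∧ v = [x, y] ∧ L.mul x y = k := by
  generalize hk : [k] = w at h
  obtain ⟨_ | ⟨_, p⟩, q, hD⟩ := h <;> simp at hk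
  obtain ⟨rfl, rfl⟩ := hk
  exact ⟨_, _, hD, rfl, rfl⟩

theorem WFWord.of_contr {u v : List G} (h : L.Contr u v) (hv : L.WFWord v) : L.WFWord u := by
  obtain @⟨p, q, x, y, hD⟩ := h
  have hchain : List.IsChain (fun a b ↦ L.s a = L.t b) (p ++ L.mul x y :: q) := hv.2
  refine ⟨by simp, (?_ : List.IsChain _ _)⟩
  rw [List.isChain_split] at hchain
  rw [List.isChain_append_cons_cons]
  simpa [List.isChain_append, List.isChain_cons, L.t_mul hD, L.s_mul hD, L.D_st hD] using hchain

theorem WFWord.of_contractsTo {u v : List G} (h : L.ContractsTo u v) (hv : L.WFWord v) :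
    L.WFWord u := by
  induction h using Relation.ReflTransGen.head_induction_on with
  | refl => exact hv
  | head step _ ih => exact ih.of_contr step

theorem contr_unit_cons (L : LocalGroupoid G M) (p q : List G) (g : G) :
    L.Contr (p ++ L.unit (L.t g) :: g :: q) (p ++ g :: q) := by
  simpa only [L.unit_mul] using Contr.mk (L := L) p q (L.D_unit_left g)

theorem contr_cons_unit (L : LocalGroupoid G M) (p q : List G) (g : G) :
    L.Contr (p ++ g :: L.unit (L.s g) :: q) (p ++ g :: q) := by
  simpa only [L.mul_unit_right] using Contr.mk (L := L) p q (L.D_unit_right g)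

theorem InvPair.contr {a b : G} (hab : L.InvPair a b) (p q : List G) :
    L.Contr (p ++ a :: b :: q) (p ++ L.unit (L.t a) :: q) := by
  simpa only [hab.2.2.1] using Contr.mk (L := L) p q hab.1

theorem InvPair.contr_swap {a b : G} (hab : L.InvPair a b) (p q : List G) :
    L.Contr (p ++ b :: a :: q) (p ++ L.unit (L.s a) :: q) := by
  simpa only [hab.2.2.2] using Contr.mk (L := L) p q hab.2.1

theorem LProd.contractsTo {l : List G} {u r : G} (h : L.LProd l u r) :
    L.ContractsTo (l ++ [u]) [r] := by
  induction h with
  | nil => exact .refl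
  | cons a _ hD ih =>
    have ih' := ih.context [a] []
    simp only [List.cons_append, List.nil_append, List.append_nil] at ih'
    exact ih'.tail (by simpa using Contr.mk (L := L) [] [] hD)

theorem RProd.contractsTo {l : List G} {u r : G} (h : L.RProd u l r) :
    L.ContractsTo (u :: l) [r] := by
  induction h with
  | nil => exact .refl
  | cons b hD _ ih => exact .head (by simpa using Contr.mk (L := L) [] _ hD) ih

theorem LProd.cancel_invPairs {a : List (G × G)} (hinv : ∀ pr ∈ a, L.InvPair pr.1 pr.2)
    {x : M} {p : G} (hp : L.LProd (a.map Prod.fst).reverse (L.unit x) p) (U : List G) :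
    L.ContractsTo ((a.map Prod.fst).reverse ++ L.unit x :: (a.map Prod.snd ++ U))
      (L.unit (L.t p) :: U) := by
  induction a using List.reverseRecOn generalizing p U with
  | nil =>
    cases hp
    rw [L.t_unit]
    exact .refl
  | append_singleton a pr ih =>
    simp only [List.map_append, List.map_cons, List.map_nil, List.reverse_append,
      List.reverse_cons, List.reverse_nil, List.nil_append,
      List.cons_append, List.append_assoc] at hp ⊢
    obtain _ | @⟨_, _, p', _, hp', hD⟩ := hp
    have hpr := hinv pr (by simp)
    have hinner := ContractsTo.context [pr.1] []
      (ih (fun q hq ↦ hinv q (List.mem_append_left _ hq)) hp' (pr.2 :: U))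
    simp only [List.append_nil, List.nil_append, List.cons_append] at hinner
    rw [(L.D_st hD).symm.trans (L.D_st hpr.1)] at hinner
    have hunit := L.contr_unit_cons [pr.1] U pr.2
    have hcancel := hpr.contr [] U
    simp only [List.cons_append, List.nil_append] at hunit hcancel
    rw [L.t_mul hD]
    exact (hinner.tail hunit).tail hcancel

theorem RProd.cancel_invPairs {b : List (G × G)} (hinv : ∀ pr ∈ b, L.InvPair pr.1 pr.2)
    {z r : G} (hr : L.RProd z (b.map Prod.fst) r) (U : List G) :
    L.ContractsTo (U ++ (b.map Prod.snd).reverse ++ L.unit (L.s z) :: b.map Prod.fst)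
      (U ++ [L.unit (L.s r)]) := by
  induction b generalizing z with
  | nil =>
    cases hr
    simp only [List.map_nil, List.reverse_nil, List.append_nil]
    exact .refl
  | cons pr b ih =>
    obtain _ | ⟨_, hD, hr'⟩ := hr
    have hpr := hinv pr (by simp)
    have hunit := L.contr_unit_cons (U ++ (b.map Prod.snd).reverse ++ [pr.2]) (b.map Prod.fst) pr.1
    have hcancel := hpr.contr_swap (U ++ (b.map Prod.snd).reverse) (b.map Prod.fst)
    rw [← L.D_st hD] at hunit
    rw [← L.s_mul hD] at hcancel
    have hrest := ih (fun q hq ↦ hinv q (List.mem_cons_of_mem _ hq)) hr'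
    simp only [List.map_cons, List.reverse_cons, List.append_assoc, List.cons_append,
      List.nil_append] at hunit hcancel hrest ⊢
    exact .head hunit (.head hcancel hrest)

theorem exists_factored_expansion_of_lProd {x y : G} (hD : L.D x y) {a : List (G × G)}
    (hinv : ∀ pr ∈ a, L.InvPair pr.1 pr.2)
    (hx : L.LProd (a.map Prod.fst).reverse (L.unit (L.s x)) x)
    (hy : L.LProd (a.map Prod.snd) (L.mul x y) y) {U : List G}
    (hU : L.ContractsTo U [L.mul x y]) :
    ∃ Wx Wy, L.ContractsTo Wx [x] ∧ L.ContractsTo Wy [y] ∧ L.ContractsTo (Wx ++ Wy) U := by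
  refine ⟨(a.map Prod.fst).reverse ++ [L.unit (L.s x)], a.map Prod.snd ++ U, hx.contractsTo,
    (ContractsTo.append .refl hU).trans hy.contractsTo, ?_⟩
  obtain ⟨u₀, U', rfl, ht⟩ := hU.exists_cons
  have hcancel := LProd.cancel_invPairs hinv hx (u₀ :: U')
  rw [← L.t_mul hD, ← ht] at hcancel
  have h : L.ContractsTo _ (u₀ :: U') :=
    hcancel.tail (by simpa using L.contr_unit_cons [] U' u₀)
  simpa using h

theorem exists_factored_expansion_of_rProd {x y : G} (hD : L.D x y) {b : List (G × G)}
    (hinv : ∀ pr ∈ b, L.InvPair pr.1 pr.2)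
    (hy : L.RProd (L.unit (L.t y)) (b.map Prod.fst) y)
    (hx : L.RProd (L.mul x y) (b.map Prod.snd).reverse x) {U : List G}
    (hU : L.ContractsTo U [L.mul x y]) :
    ∃ Wx Wy, L.ContractsTo Wx [x] ∧ L.ContractsTo Wy [y] ∧ L.ContractsTo (Wx ++ Wy) U := by
  refine ⟨U ++ (b.map Prod.snd).reverse, L.unit (L.t y) :: b.map Prod.fst,
    (ContractsTo.append hU .refl).trans hx.contractsTo, hy.contractsTo, ?_⟩
  obtain ⟨U', uₗ, rfl, hs⟩ := hU.exists_concat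
  have hcancel := RProd.cancel_invPairs hinv hy (U' ++ [uₗ])
  rw [L.s_unit, ← L.s_mul hD, ← hs] at hcancel
  have h : L.ContractsTo _ (U' ++ [uₗ]) :=
    hcancel.tail (by simpa using L.contr_cons_unit U' [] uₗ)
  simpa using h

theorem InvDecomp.exists_factored_expansion (hID : L.InvDecomp) {x y : G} (hD : L.D x y)
    {U : List G} (hU : L.ContractsTo U [L.mul x y]) :
    ∃ Wx Wy, L.ContractsTo Wx [x] ∧ L.ContractsTo Wy [y] ∧ L.ContractsTo (Wx ++ Wy) U := by
  obtain ⟨a, hinv, hx, hy⟩ | ⟨b, hinv, hy, hx⟩ := hID x y hD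
  · exact exists_factored_expansion_of_lProd hD hinv hx hy hU
  · exact exists_factored_expansion_of_rProd hD hinv hy hx hU

theorem InvDecomp.join_singleton (hID : L.InvDecomp) {k : G} {U V : List G}
    (hU : L.ContractsTo U [k]) (hV : L.ContractsTo V [k]) :
    ∃ Z, L.ContractsTo Z U ∧ L.ContractsTo Z V := by
  induction hn : V.length using Nat.strong_induction_on generalizing k U V with
  | _ n ih =>
    rcases Relation.ReflTransGen.cases_tail hV with rfl | ⟨c, hVc, hstep⟩
    · exact ⟨U, .refl, hU⟩
    obtain ⟨x, y, hD, rfl, rfl⟩ := hstep.exists_pair_of_singleton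
    obtain ⟨V₁, V₂, rfl, hV₁, hV₂⟩ := ContractsTo.exists_append_of_append (w₁ := [x]) hVc
    obtain ⟨W₁, W₂, hW₁, hW₂, hW⟩ := hID.exists_factored_expansion hD hU
    have hlen₁ := hV₁.length_le
    have hlen₂ := hV₂.length_le
    simp only [List.length_append, List.length_singleton] at hn hlen₁ hlen₂
    obtain ⟨Z₁, hZ₁W, hZ₁V⟩ := ih _ (by omega) hW₁ hV₁ rfl
    obtain ⟨Z₂, hZ₂W, hZ₂V⟩ := ih _ (by omega) hW₂ hV₂ rfl
    exact ⟨Z₁ ++ Z₂, (hZ₁W.append hZ₂W).trans hW, hZ₁V.append hZ₂V⟩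

theorem InvDecomp.join (hID : L.InvDecomp) {u v w : List G} (hu : L.ContractsTo u w)
    (hv : L.ContractsTo v w) : ∃ z, L.ContractsTo z u ∧ L.ContractsTo z v := by
  induction w generalizing u v with
  | nil => exact ⟨[], hu.eq_nil ▸ .refl, hv.eq_nil ▸ .refl⟩
  | cons k w ih =>
    obtain ⟨u₁, u₂, rfl, hu₁, hu₂⟩ := ContractsTo.exists_append_of_append (w₁ := [k]) hu
    obtain ⟨v₁, v₂, rfl, hv₁, hv₂⟩ := ContractsTo.exists_append_of_append (w₁ := [k]) hv
    obtain ⟨z₁, hz₁u, hz₁v⟩ := hID.join_singleton hu₁ hv₁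
    obtain ⟨z₂, hz₂u, hz₂v⟩ := ih hu₂ hv₂
    exact ⟨z₁ ++ z₂, hz₁u.append hz₂u, hz₁v.append hz₂v⟩

theorem InvDecomp.wordEquiv_iff (hID : L.InvDecomp) {u v : List G} :
    L.WordEquiv u v ↔ ∃ z, L.ContractsTo z u ∧ L.ContractsTo z v := by
  refine ⟨fun h ↦ ?_, fun ⟨z, hzu, hzv⟩ ↦ .trans _ _ _ (.symm _ _ hzu.wordEquiv) hzv.wordEquiv⟩
  induction h with
  | rel u v huv => exact ⟨u, .refl, .single huv⟩
  | refl u => exact ⟨u, .refl, .refl⟩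
  | symm u v _ ih =>
    obtain ⟨z, hzu, hzv⟩ := ih
    exact ⟨z, hzv, hzu⟩
  | trans u v w _ _ ihuv ihvw =>
    obtain ⟨z₁, hz₁u, hz₁v⟩ := ihuv
    obtain ⟨z₂, hz₂v, hz₂w⟩ := ihvw
    obtain ⟨z, hzz₁, hzz₂⟩ := hID.join hz₁v hz₂v
    exact ⟨z, hzz₁.trans hz₁u, hzz₂.trans hz₂w⟩

end LocalGroupoid

theorem wordEquiv_iff_common_expansion_general {G M : Type*} (L : LocalGroupoid G M)
    (hID : L.InvDecomp)
    (w₁ w₂ : List G) (h₁ : L.WFWord w₁) :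
    L.WordEquiv w₁ w₂ ↔
      ∃ w₃, L.WFWord w₃ ∧ L.ContractsTo w₃ w₁ ∧ L.ContractsTo w₃ w₂ := by
  rw [hID.wordEquiv_iff]
  exact ⟨fun ⟨w₃, h₃₁, h₃₂⟩ ↦ ⟨w₃, h₁.of_contractsTo h₃₁, h₃₁, h₃₂⟩,
    fun ⟨w₃, _, h₃₁, h₃₂⟩ ↦ ⟨w₃, h₃₁, h₃₂⟩⟩

/-- For a local groupoid with the inverse-decomposition property,
two well-formed words are equivalent if and only if they admit a common expansion:
`w₁ ~ w₂ ↔ ∃ w₃, w₁ ≤ w₃ ∧ w₂ ≤ w₃` (where `w ≤ w₃` means `w₃` is obtained from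
`w` by a finite sequence of expansions, i.e. `w₃` contracts to `w`). -/
theorem wordEquiv_iff_common_expansion {G M : Type*} (L : LocalGroupoid G M)
    (hID : L.InvDecomp)
    (w₁ w₂ : List G) (h₁ : L.WFWord w₁) (h₂ : L.WFWord w₂) :
    L.WordEquiv w₁ w₂ ↔
      ∃ w₃, L.WFWord w₃ ∧ L.ContractsTo w₃ w₁ ∧ L.ContractsTo w₃ w₂ :=
  wordEquiv_iff_common_expansion_general L hID w₁ w₂ h₁
end

section
/- Counterexample to word contraction without simple connectedness: let Γ = ℝ/ℤ and U = (-0.5, 0.5) mod ℤ, viewed as a local group with multiplication defined when the representatives sum into (-0.5,0.5). Then in Γ one has 0.25+0.25+0.25+0.25 = 0, but the word (0.25, 0.25, 0.25, 0.25) is NOT equivalent to the word (0) in W(U); equivalently, the natural homomorphism AC(U) → ℝ/ℤ is not injective. -/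
/-- The open interval `(-1/2, 1/2) ⊂ ℝ`, the set of canonical representatives of
`U = (-0.5, 0.5) mod ℤ ⊂ ℝ/ℤ`. -/
def Ihalf : Set ℝ := Set.Ioo (-(1/2) : ℝ) (1/2)

open Classical in
/-- The local group `U = (-0.5, 0.5)`: the sum of two elements is defined iff the sum
of the canonical representatives again lies in `(-0.5, 0.5)`. -/
noncomputable def intervalLocalGroupHalf : LocalGroupoid Ihalf Unit where
  s _ := ()
  t _ := ()
  unit _ := ⟨0, by norm_num [Ihalf]⟩
  s_unit _ := rfl
  t_unit _ := rfl
  D a b := (a : ℝ) + b ∈ Ihalf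
  D_st _ := rfl
  mul a b := if h : (a : ℝ) + b ∈ Ihalf then ⟨(a : ℝ) + b, h⟩ else ⟨0, by norm_num [Ihalf]⟩
  D_unit_right g := by simpa using g.2
  D_unit_left g := by simpa using g.2
  s_mul _ := rfl
  t_mul _ := rfl
  mul_unit_right g := by rcases g with ⟨g, hg⟩; simp [hg]
  unit_mul g := by rcases g with ⟨g, hg⟩; simp [hg]
  assoc3 := by
    rintro ⟨g, hg⟩ ⟨h, hh⟩ ⟨k, hk⟩ d1 d2 d3 d4
    simp only [dif_pos d1] at d2 ⊢
    simp only [dif_pos d3] at d4 ⊢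
    simp only [dif_pos d2, dif_pos d4]
    exact Subtype.ext (add_assoc g h k)

/-- The element `0.25` of the local group `U`. -/
noncomputable def qtr : Ihalf := ⟨1/4, by norm_num [Ihalf]⟩

/-- The element `0` of the local group `U`. -/
noncomputable def zeroU : Ihalf := ⟨0, by norm_num [Ihalf]⟩

namespace LocalGroupoid

variable {G M A : Type*} [AddMonoid A] (L : LocalGroupoid G M)

theorem sum_map_eq_of_contr {φ : G → A} (hφ : ∀ {g h}, L.D g h → φ (L.mul g h) = φ g + φ h)
    {w v : List G} (hwv : L.Contr w v) : (w.map φ).sum = (v.map φ).sum := by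
  obtain ⟨p, q, hD⟩ := hwv
  simp [hφ hD, add_assoc]

theorem sum_map_eq_of_wordEquiv {φ : G → A}
    (hφ : ∀ {g h}, L.D g h → φ (L.mul g h) = φ g + φ h) {w v : List G}
    (hwv : L.WordEquiv w v) : (w.map φ).sum = (v.map φ).sum :=
  congrArg (Quot.lift (fun u : List G => (u.map φ).sum) fun _ _ => L.sum_map_eq_of_contr hφ)
    (Quot.eqvGen_sound hwv)

end LocalGroupoid

theorem intervalLocalGroupHalf_val_mul {a b : Ihalf} (hab : intervalLocalGroupHalf.D a b) :
    (intervalLocalGroupHalf.mul a b : ℝ) = a + b := by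
  have hab' : (a : ℝ) + b ∈ Ihalf := hab
  simp only [intervalLocalGroupHalf, dif_pos hab']

/-- Products in `U` are honest sums in `ℝ`, so the real sum of the letters is invariant:
it is `1` for `(¼, ¼, ¼, ¼)` but `0` for `(0)`. -/
theorem not_wordEquiv_qtr_zeroU :
    ¬ intervalLocalGroupHalf.WordEquiv [qtr, qtr, qtr, qtr] [zeroU] := fun h => by
  have hsum := intervalLocalGroupHalf.sum_map_eq_of_wordEquiv
    intervalLocalGroupHalf_val_mul h
  norm_num [qtr, zeroU] at hsum

/-- In `Γ = ℝ/ℤ` one has `0.25 + 0.25 + 0.25 + 0.25 = 0`, but in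
the local group `U = (-0.5, 0.5) mod ℤ` the word `(0.25, 0.25, 0.25, 0.25)` is not
equivalent to the one-letter word `(0)`; equivalently, the natural homomorphism
`AC(U) → ℝ/ℤ` is not injective. -/
theorem interval_word_not_contractible :
    ((((1 : ℝ)/4 + 1/4 + 1/4 + 1/4 : ℝ) : AddCircle (1 : ℝ)) = 0) ∧
    ¬ intervalLocalGroupHalf.WordEquiv [qtr, qtr, qtr, qtr] [zeroU] ∧
    ∃ w v : List Ihalf, w ≠ [] ∧ v ≠ [] ∧
      (((w.map Subtype.val).sum : ℝ) : AddCircle (1 : ℝ)) =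
        (((v.map Subtype.val).sum : ℝ) : AddCircle (1 : ℝ)) ∧
      ¬ intervalLocalGroupHalf.WordEquiv w v := by
  have hturn : (((1 : ℝ)/4 + 1/4 + 1/4 + 1/4 : ℝ) : AddCircle (1 : ℝ)) = 0 := by
    norm_num
  refine ⟨hturn, not_wordEquiv_qtr_zeroU, [qtr, qtr, qtr, qtr], [zeroU], List.cons_ne_nil _ _,
    List.cons_ne_nil _ _, ?_, not_wordEquiv_qtr_zeroU⟩
  simpa [qtr, zeroU, ← add_assoc] using hturn
end
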